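/- arXiv:2007.11652 — 2 statements merged into one kernel-verified Lean document; each statement's English description precedes it below -/
import Mathlib

section
/- (Good-step bound, pairwise direction) Let A be symmetric nonnegative with zero diagonal, entries a_{ij} ≤ M̄ off-diagonal. Let x ∈ Δ, i maximize (Ax)_i over all components, j minimize (Ax)_j over the support of x, d = e_i − e_j with a_{ij} > 0, γ* = ((Ax)_i − (Ax)_j)/(2a_{ij}), and x⁺ = x + γ* d. Then the Frank-Wolfe gap g = 2((Ax)_i − xᵀAx) satisfies g² ≤ 8M̄ (f(x⁺) − f(x)). -/
/-!
Moving mass `γ` from `j` to `i` changes `f` by `2γδ - 2γ²a`, where `δ = (Ax)_i - (Ax)_j` and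
`a = a_{ij}` (symmetry and the zero diagonal give `dᵀAd = -2a`), so the exact line-search step
gains `δ² / (2a)`. Since `f(x)` is an `x`-average of the `(Ax)_k` over the support of `x`, it lies
between `(Ax)_j` and `(Ax)_i`, hence `0 ≤ g ≤ 2δ` and `g² ≤ 4δ² = 8a · δ²/(2a) ≤ 8M̄ · gain`.
-/

open Matrix

section QuadraticForm

variable {ι R : Type*} [Fintype ι] [CommRing R]

theorem Matrix.IsSymm.dotProduct_mulVec_comm {A : Matrix ι ι R} (hA : A.IsSymm) (v w : ι → R) :
    v ⬝ᵥ A *ᵥ w = w ⬝ᵥ A *ᵥ v := by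
  rw [dotProduct_mulVec, ← mulVec_transpose, hA.eq, dotProduct_comm]

theorem Matrix.IsSymm.quadForm_add_smul {A : Matrix ι ι R} (hA : A.IsSymm) (x d : ι → R) (t : R) :
    (x + t • d) ⬝ᵥ A *ᵥ (x + t • d)
      = x ⬝ᵥ A *ᵥ x + 2 * t * (d ⬝ᵥ A *ᵥ x) + t ^ 2 * (d ⬝ᵥ A *ᵥ d) := by
  simp only [mulVec_add, mulVec_smul, dotProduct_add, add_dotProduct, smul_dotProduct,
    dotProduct_smul, smul_eq_mul, hA.dotProduct_mulVec_comm x d]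
  ring

variable [DecidableEq ι]

theorem single_sub_single_dotProduct (i j : ι) (v : ι → R) :
    (Pi.single i 1 - Pi.single j 1 : ι → R) ⬝ᵥ v = v i - v j := by
  simp [sub_dotProduct]

theorem Matrix.quadForm_single_sub_single (A : Matrix ι ι R) (i j : ι) :
    (Pi.single i 1 - Pi.single j 1 : ι → R) ⬝ᵥ A *ᵥ (Pi.single i 1 - Pi.single j 1)
      = A i i - A i j - (A j i - A j j) := by
  rw [single_sub_single_dotProduct]
  simp [mulVec_sub]

end QuadraticForm

section Simplex

variable {ι 𝕜 : Type*} [Fintype ι] [Field 𝕜] [LinearOrder 𝕜] [IsStrictOrderedRing 𝕜]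
  {x v : ι → 𝕜} (hx : x ∈ stdSimplex 𝕜 ι)
include hx

theorem dotProduct_le_of_mem_stdSimplex {c : 𝕜} (hv : ∀ k, v k ≤ c) : x ⬝ᵥ v ≤ c :=
  calc x ⬝ᵥ v ≤ ∑ k, x k * c :=
        Finset.sum_le_sum fun k _ => mul_le_mul_of_nonneg_left (hv k) (hx.1 k)
    _ = c := by rw [← Finset.sum_mul, hx.2, one_mul]

theorem le_dotProduct_of_mem_stdSimplex {c : 𝕜} (hv : ∀ k, 0 < x k → c ≤ v k) : c ≤ x ⬝ᵥ v :=
  calc c = ∑ k, x k * c := by rw [← Finset.sum_mul, hx.2, one_mul]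
    _ ≤ x ⬝ᵥ v := Finset.sum_le_sum fun k _ => by
        rcases (hx.1 k).eq_or_lt with hk | hk
        · simp [← hk]
        · exact mul_le_mul_of_nonneg_left (hv k hk) hk.le

end Simplex

theorem Matrix.IsSymm.quadForm_pairwise_exact_step {ι K : Type*} [Fintype ι] [DecidableEq ι]
    [Field K] [CharZero K] {A : Matrix ι ι K} (hA : A.IsSymm) (hdiag : ∀ k, A k k = 0) (x : ι → K)
    {i j : ι} (hij : A i j ≠ 0) :
    (x + (((A *ᵥ x) i - (A *ᵥ x) j) / (2 * A i j)) • (Pi.single i 1 - Pi.single j 1)) ⬝ᵥ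
        A *ᵥ (x + (((A *ᵥ x) i - (A *ᵥ x) j) / (2 * A i j)) • (Pi.single i 1 - Pi.single j 1))
      - x ⬝ᵥ A *ᵥ x = ((A *ᵥ x) i - (A *ᵥ x) j) ^ 2 / (2 * A i j) := by
  rw [hA.quadForm_add_smul, single_sub_single_dotProduct, quadForm_single_sub_single, hdiag,
    hdiag, hA.apply i j]
  field_simp
  ring

theorem pfw_good_step_bound_general {n : ℕ}
    (A : Matrix (Fin n) (Fin n) ℝ)
    (hsymm : ∀ i j, A i j = A j i)
    (hdiag : ∀ i, A i i = 0)
    (Mhi : ℝ) (hbound : ∀ i j, i ≠ j → A i j ≤ Mhi)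
    (x : Fin n → ℝ) (hx : x ∈ stdSimplex ℝ (Fin n))
    (i : Fin n) (hi : ∀ k, A.mulVec x k ≤ A.mulVec x i)
    (j : Fin n)
    (hj : ∀ k, 0 < x k → A.mulVec x j ≤ A.mulVec x k)
    (hApos : 0 < A i j)
    (d : Fin n → ℝ)
    (hd : d = (Pi.single i 1 : Fin n → ℝ) - (Pi.single j 1 : Fin n → ℝ))
    (γstar : ℝ) (hγ : γstar = (A.mulVec x i - A.mulVec x j) / (2 * A i j))
    (xplus : Fin n → ℝ) (hxp : xplus = x + γstar • d)
    (g : ℝ) (hg : g = 2 * (A.mulVec x i - x ⬝ᵥ A.mulVec x)) :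
    g ^ 2 ≤ 8 * Mhi * (xplus ⬝ᵥ A.mulVec xplus - x ⬝ᵥ A.mulVec x) := by
  have hij : i ≠ j := by rintro rfl; exact hApos.ne' (hdiag i)
  have hA : A.IsSymm := IsSymm.ext fun k l => hsymm l k
  have hgain := hA.quadForm_pairwise_exact_step hdiag x hApos.ne'
  rw [← hd, ← hγ, ← hxp] at hgain
  set δ := (A *ᵥ x) i - (A *ᵥ x) j
  have hf_le : x ⬝ᵥ A *ᵥ x ≤ (A *ᵥ x) i := dotProduct_le_of_mem_stdSimplex hx hi
  have hf_ge : (A *ᵥ x) j ≤ x ⬝ᵥ A *ᵥ x := le_dotProduct_of_mem_stdSimplex hx hj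
  calc g ^ 2 ≤ (2 * δ) ^ 2 := by rw [hg]; gcongr; linarith
    _ = 8 * A i j * (δ ^ 2 / (2 * A i j)) := by field_simp; ring
    _ ≤ 8 * Mhi * (xplus ⬝ᵥ A.mulVec xplus - x ⬝ᵥ A.mulVec x) := by
      rw [hgain]; gcongr; exact hbound i j hij

/-- Good-step bound, pairwise direction: with nonnegative
off-diagonal entries bounded by `M̄` and zero diagonal, `i` maximizing
`(A x)_i`, `j` minimizing `(A x)_j` over the support of `x`, `d = e_i - e_j`,
`a_{ij} > 0`, `γ* = ((A x)_i - (A x)_j)/(2 a_{ij})` and `x⁺ = x + γ* d`,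
the gap `g = 2 ((A x)_i - xᵀ A x)` satisfies `g² ≤ 8 M̄ (f x⁺ - f x)`. -/
theorem pfw_good_step_bound {n : ℕ}
    (A : Matrix (Fin n) (Fin n) ℝ)
    (hsymm : ∀ i j, A i j = A j i)
    (hnonneg : ∀ i j, 0 ≤ A i j)
    (hdiag : ∀ i, A i i = 0)
    (Mhi : ℝ) (hbound : ∀ i j, i ≠ j → A i j ≤ Mhi)
    (x : Fin n → ℝ) (hx : x ∈ stdSimplex ℝ (Fin n))
    (i : Fin n) (hi : ∀ k, A.mulVec x k ≤ A.mulVec x i)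
    (j : Fin n) (hjsupp : 0 < x j)
    (hj : ∀ k, 0 < x k → A.mulVec x j ≤ A.mulVec x k)
    (hApos : 0 < A i j)
    (d : Fin n → ℝ)
    (hd : d = (Pi.single i 1 : Fin n → ℝ) - (Pi.single j 1 : Fin n → ℝ))
    (γstar : ℝ) (hγ : γstar = (A.mulVec x i - A.mulVec x j) / (2 * A i j))
    (xplus : Fin n → ℝ) (hxp : xplus = x + γstar • d)
    (g : ℝ) (hg : g = 2 * (A.mulVec x i - x ⬝ᵥ A.mulVec x)) :
    g ^ 2 ≤ 8 * Mhi * (xplus ⬝ᵥ A.mulVec xplus - x ⬝ᵥ A.mulVec x) :=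
  pfw_good_step_bound_general A hsymm hdiag Mhi hbound x hx i hi j hj hApos d hd γstar hγ xplus hxp
    g hg
end

section
/- (Swap/drop step count for pairwise FW) In a sequence of pairwise FW iterates on Δ ⊂ ℝ^n where function values strictly increase at good steps and remain distinct across iterates, at most 3·n! consecutive swap/drop steps can occur between two good steps: the number of multisets permutations bound ∑_{ℓ=1}^{m} n!/(n−ℓ)! ≤ n!·e ≤ 3·n! holds for any 1 ≤ m ≤ n. -/
open Finset

/-- Reflecting `ℓ ↦ n - ℓ` turns the sum into `n! ∑_{k=0}^{n} 1/k!`, a partial sum of the series of `n! · e`. -/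
theorem sum_range_descFactorial_le_exp_one_mul_factorial (n : ℕ) :
    ∑ ℓ ∈ range (n + 1), (n.descFactorial ℓ : ℝ) ≤ Real.exp 1 * n.factorial := by
  have descFactorial_eq (k : ℕ) (hk : k ∈ range (n + 1)) :
      (n.descFactorial (n - k) : ℝ) = n.factorial * (1 / (k.factorial : ℝ)) := by
    have hkn : k ≤ n := Nat.lt_succ_iff.mp (mem_range.mp hk)
    have h := Nat.factorial_mul_descFactorial (Nat.sub_le n k)
    rw [Nat.sub_sub_self hkn] at h
    field_simp
    exact_mod_cast (mul_comm _ _).trans h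
  calc ∑ ℓ ∈ range (n + 1), (n.descFactorial ℓ : ℝ)
      = ∑ k ∈ range (n + 1), (n.descFactorial (n - k) : ℝ) :=
        (sum_range_reflect (fun ℓ => (n.descFactorial ℓ : ℝ)) (n + 1)).symm
    _ = n.factorial * ∑ k ∈ range (n + 1), 1 / (k.factorial : ℝ) := by
        rw [sum_congr rfl descFactorial_eq, mul_sum]
    _ ≤ n.factorial * Real.exp 1 := by
        gcongr
        simpa using Real.sum_le_exp_of_nonneg zero_le_one (n + 1)
    _ = Real.exp 1 * n.factorial := mul_comm _ _

theorem pfw_swap_count_bound_general (n m : ℕ) (hmn : m ≤ n) :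
    (∑ ℓ ∈ Finset.Icc 1 m, ((n.factorial / (n - ℓ).factorial : ℕ) : ℝ))
      ≤ Real.exp 1 * n.factorial ∧
    Real.exp 1 * (n.factorial : ℝ) ≤ 3 * n.factorial := by
  constructor
  · calc (∑ ℓ ∈ Icc 1 m, ((n.factorial / (n - ℓ).factorial : ℕ) : ℝ))
        = ∑ ℓ ∈ Icc 1 m, (n.descFactorial ℓ : ℝ) := by
          refine sum_congr rfl fun ℓ hℓ => ?_
          rw [Nat.descFactorial_eq_div ((mem_Icc.mp hℓ).2.trans hmn)]
      _ ≤ ∑ ℓ ∈ range (n + 1), (n.descFactorial ℓ : ℝ) := by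
          refine sum_le_sum_of_subset_of_nonneg (fun ℓ hℓ => ?_) fun _ _ _ => by positivity
          simp only [mem_Icc, mem_range] at hℓ ⊢
          omega
      _ ≤ Real.exp 1 * n.factorial := sum_range_descFactorial_le_exp_one_mul_factorial n
  · gcongr
    exact Real.exp_one_lt_d9.le.trans (by norm_num)

/-- Swap/drop step count bound for pairwise FW, combinatorial
core: for any `1 ≤ m ≤ n`,
`∑_{ℓ=1}^{m} n!/(n-ℓ)! ≤ e · n! ≤ 3 · n!`. -/
theorem pfw_swap_count_bound (n m : ℕ) (hn : 1 ≤ n) (hm : 1 ≤ m) (hmn : m ≤ n) :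
    (∑ ℓ ∈ Finset.Icc 1 m, ((n.factorial / (n - ℓ).factorial : ℕ) : ℝ))
      ≤ Real.exp 1 * n.factorial ∧
    Real.exp 1 * (n.factorial : ℝ) ≤ 3 * n.factorial :=
  pfw_swap_count_bound_general n m hmn
end
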